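/- arXiv:2001.05114 — 5 statements merged into one kernel-verified Lean document; each statement's English description precedes it below -/
import Mathlib

section
/- For all real x with x > 2, the logarithmic integral satisfies ∫₂ˣ 1/log t dt ≤ 1.37 · x / log x. -/
/-!
Put `φ x = 1.37 * x / log x`. Then `φ' t - 1 / log t = (0.37 * log t - 1.37) / log t ^ 2`
changes sign exactly once, at `x₀ = exp (137 / 37)`, so `φ - Li` is minimal on `(1, ∞)` at `x₀`,
where `φ x₀ = 0.37 * x₀`. It remains to check `Li x₀ ≤ 0.37 * x₀ ≈ 15.006` (in fact
`Li x₀ ≈ 14.945`). Since `1 / log` is convex on `(1, ∞)`, the trapezoidal rule overestimates its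
integral. On the nodes `2 ^ (k / 4)`, `4 ≤ k ≤ 21`, where `1 / log` takes the values
`4 / (k * log 2)`, followed by one step up to `x₀`, where it is `37 / 137`, the rule gives `14.982`.
-/

open Real Set MeasureTheory intervalIntegral

theorem ConvexOn.le_chord {f : ℝ → ℝ} {s : Set ℝ} (hf : ConvexOn ℝ s f) {a b t : ℝ}
    (ha : a ∈ s) (hb : b ∈ s) (hat : a ≤ t) (htb : t ≤ b) (hab : a < b) :
    f t ≤ f a + (t - a) * ((f b - f a) / (b - a)) := by
  have hba : 0 < b - a := sub_pos.2 hab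
  have hconv := hf.2 ha hb (div_nonneg (sub_nonneg.2 htb) hba.le)
    (div_nonneg (sub_nonneg.2 hat) hba.le) (by field_simp; ring)
  have ht : ((b - t) / (b - a)) • a + ((t - a) / (b - a)) • b = t := by
    simp only [smul_eq_mul]; field_simp; ring
  rw [ht] at hconv
  calc f t ≤ ((b - t) / (b - a)) • f a + ((t - a) / (b - a)) • f b := hconv
    _ = _ := by simp only [smul_eq_mul]; field_simp; ring

theorem ConvexOn.integral_le_trapezoid {f : ℝ → ℝ} {s : Set ℝ} (hf : ConvexOn ℝ s f)
    {a b : ℝ} (hcont : ContinuousOn f (Icc a b)) (ha : a ∈ s) (hb : b ∈ s) (hab : a ≤ b) :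
    ∫ x in a..b, f x ≤ (b - a) * (f a + f b) / 2 := by
  rcases hab.eq_or_lt with rfl | hab
  · simp
  set k := (f b - f a) / (b - a)
  have hderiv (x : ℝ) :
      HasDerivAt (fun x => f a * x + k * (x - a) ^ 2 / 2) (f a + (x - a) * k) x := by
    refine (((hasDerivAt_id x).const_mul (f a)).add
      ((((hasDerivAt_id x).sub_const a).pow 2).const_mul k |>.div_const 2)).congr_deriv ?_
    simp only [id, mul_one]; ring
  calc ∫ x in a..b, f x ≤ (f a * b + k * (b - a) ^ 2 / 2) - (f a * a + k * (a - a) ^ 2 / 2) :=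
        integral_le_sub_of_hasDeriv_right_of_le hab.le
          (fun x _ => (hderiv x).continuousAt.continuousWithinAt)
          (fun x _ => (hderiv x).hasDerivWithinAt) (hcont.integrableOn_Icc)
          (fun x hx => hf.le_chord ha hb hx.1.le hx.2.le hab)
    _ = (b - a) * (f a + f b) / 2 := by
        simp only [k]; field_simp [(sub_pos.2 hab).ne']; ring

theorem ConvexOn.integral_le_sum_trapezoid {f : ℝ → ℝ} {s : Set ℝ} (hf : ConvexOn ℝ s f)
    (hcont : ContinuousOn f s) {p : ℕ → ℝ} {m n : ℕ} (hmn : m ≤ n)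
    (hp : ∀ k ∈ Finset.Ico m n, p k ≤ p (k + 1)) (hps : ∀ k ∈ Finset.Icc m n, p k ∈ s) :
    ∫ x in p m..p n, f x ≤
      ∑ k ∈ Finset.Ico m n, (p (k + 1) - p k) * (f (p k) + f (p (k + 1))) / 2 := by
  have hmem (k) (hk : k ∈ Finset.Ico m n) : p k ∈ s ∧ p (k + 1) ∈ s := by
    simp only [Finset.mem_Ico] at hk
    exact ⟨hps k (Finset.mem_Icc.2 ⟨hk.1, hk.2.le⟩),
      hps (k + 1) (Finset.mem_Icc.2 ⟨by omega, hk.2⟩)⟩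
  have hcont' (k) (hk : k ∈ Finset.Ico m n) : ContinuousOn f (uIcc (p k) (p (k + 1))) :=
    hcont.mono (hf.1.ordConnected.uIcc_subset (hmem k hk).1 (hmem k hk).2)
  rw [← sum_integral_adjacent_intervals_Ico hmn
    fun k hk => (hcont' k (Finset.mem_Ico.2 hk)).intervalIntegrable]
  refine Finset.sum_le_sum fun k hk =>
    hf.integral_le_trapezoid ?_ (hmem k hk).1 (hmem k hk).2 (hp k hk)
  simpa [uIcc_of_le (hp k hk)] using hcont' k hk

theorem convexOn_one_div_log : ConvexOn ℝ (Ioi 1) fun t => 1 / log t := by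
  refine ⟨convex_Ioi 1, fun a (ha : 1 < a) b (hb : 1 < b) μ ν hμ hν hμν => ?_⟩
  have hlog := (strictConcaveOn_log_Ioi.concaveOn).2 (zero_lt_one.trans ha) (zero_lt_one.trans hb)
    hμ hν hμν
  have hinv := (convexOn_zpow (𝕜 := ℝ) (-1)).2 (log_pos ha) (log_pos hb) hμ hν hμν
  simp only [zpow_neg_one, smul_eq_mul] at hlog hinv ⊢
  have hpos : 0 < μ * log a + ν * log b := by
    rcases le_total (log a) (log b) with h | h
    · nlinarith [log_pos ha, mul_le_mul_of_nonneg_left h hν]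
    · nlinarith [log_pos hb, mul_le_mul_of_nonneg_left h hμ]
  simpa only [one_div] using (inv_anti₀ hpos hlog).trans hinv

theorem continuousOn_one_div_log : ContinuousOn (fun t => 1 / log t) (Ioi 1) :=
  continuousOn_const.div (continuousOn_log.mono fun t (ht : 1 < t) => (zero_lt_one.trans ht).ne')
    fun t (ht : 1 < t) => (log_pos ht).ne'

theorem intervalIntegrable_one_div_log {a b : ℝ} (ha : 1 < a) (hb : 1 < b) :
    IntervalIntegrable (fun t => 1 / log t) volume a b :=
  (continuousOn_one_div_log.mono (ordConnected_Ioi.uIcc_subset ha hb)).intervalIntegrable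

theorem integral_one_div_log_pow_le_sum {ρ : ℝ} (hρ : 1 < ρ) {m n : ℕ} (hm : 0 < m)
    (hmn : m ≤ n) :
    ∫ t in ρ ^ m..ρ ^ n, 1 / log t ≤
      ∑ k ∈ Finset.Ico m n, (ρ ^ (k + 1) - ρ ^ k) * (1 / k + 1 / (k + 1)) / (2 * log ρ) := by
  refine (convexOn_one_div_log.integral_le_sum_trapezoid continuousOn_one_div_log hmn
    (fun k _ => pow_le_pow_right₀ hρ.le k.le_succ)
    (fun k hk => one_lt_pow₀ hρ (by rw [Finset.mem_Icc] at hk; omega))).trans_eq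
    (Finset.sum_congr rfl fun k hk => ?_)
  have hk : (0 : ℝ) < k := by
    rw [Finset.mem_Ico] at hk; exact_mod_cast hm.trans_le hk.1
  rw [log_pow, log_pow]
  push_cast
  field_simp

theorem hasDerivAt_mul_div_log (c : ℝ) {t : ℝ} (ht : 1 < t) :
    HasDerivAt (fun x => c * x / log x) (c * (log t - 1) / log t ^ 2) t := by
  have hlog : log t ≠ 0 := (log_pos ht).ne'
  refine (((hasDerivAt_id t).const_mul c).div (hasDerivAt_log (by positivity)) hlog).congr_deriv ?_
  field_simp
  simp only [id]
  ring

theorem one_div_le_mul_sub_one_div_sq {c L : ℝ} (hc : 1 < c) (hL : c / (c - 1) ≤ L) :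
    1 / L ≤ c * (L - 1) / L ^ 2 := by
  have hc1 : 0 < c - 1 := sub_pos.2 hc
  have hL0 : 0 < L := (div_pos (by linarith) hc1).trans_le hL
  rw [div_le_iff₀ hc1] at hL
  rw [div_le_div_iff₀ hL0 (by positivity)]
  nlinarith

theorem mul_sub_one_div_sq_le_one_div {c L : ℝ} (hc : 1 < c) (hL0 : 0 < L)
    (hL : L ≤ c / (c - 1)) : c * (L - 1) / L ^ 2 ≤ 1 / L := by
  have hc1 : 0 < c - 1 := sub_pos.2 hc
  rw [le_div_iff₀ hc1] at hL
  rw [div_le_div_iff₀ (by positivity) hL0]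
  nlinarith

theorem integral_one_div_log_le_sub {c x : ℝ} (hc : 1 < c) (hx : 1 < x) :
    ∫ t in exp (c / (c - 1))..x, 1 / log t ≤ c * x / log x - (c - 1) * exp (c / (c - 1)) := by
  set x₀ := exp (c / (c - 1))
  have hc1 : 0 < c - 1 := sub_pos.2 hc
  have hlogx₀ : log x₀ = c / (c - 1) := log_exp _
  have hx₀ : 1 < x₀ := one_lt_exp_iff.2 (div_pos (by linarith) hc1)
  have hφx₀ : c * x₀ / log x₀ = (c - 1) * x₀ := by rw [hlogx₀]; field_simp
  rw [← hφx₀]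
  have hφ {a b : ℝ} (ha : 1 < a) (t) (ht : t ∈ Icc a b) :=
    hasDerivAt_mul_div_log c (ha.trans_le ht.1)
  have hint {a b : ℝ} (ha : 1 < a) : IntegrableOn (fun t => 1 / log t) (Icc a b) :=
    (continuousOn_one_div_log.mono fun t ht => ha.trans_le ht.1).integrableOn_Icc
  rcases le_total x₀ x with hx₀x | hxx₀
  · refine integral_le_sub_of_hasDeriv_right_of_le hx₀x
      (fun t ht => (hφ hx₀ t ht).continuousAt.continuousWithinAt)
      (fun t ht => (hφ hx₀ t (Ioo_subset_Icc_self ht)).hasDerivWithinAt) (hint hx₀) fun t ht => ?_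
    refine one_div_le_mul_sub_one_div_sq hc ?_
    rw [← hlogx₀]
    exact log_le_log (by linarith) ht.1.le
  · rw [integral_symm, neg_le, neg_sub]
    refine sub_le_integral_of_hasDeriv_right_of_le hxx₀
      (fun t ht => (hφ hx t ht).continuousAt.continuousWithinAt)
      (fun t ht => (hφ hx t (Ioo_subset_Icc_self ht)).hasDerivWithinAt) (hint hx) fun t ht => ?_
    refine mul_sub_one_div_sq_le_one_div hc (log_pos (hx.trans ht.1)) ?_
    rw [← hlogx₀]
    exact log_le_log (by linarith [ht.1]) ht.2.le

theorem two_rpow_quarter_mem_Icc : (2 : ℝ) ^ (1 / 4 : ℝ) ∈ Icc 1.189207115 1.189207116 := by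
  have h4 : ((2 : ℝ) ^ (1 / 4 : ℝ)) ^ 4 = 2 := by
    rw [← rpow_natCast, ← rpow_mul zero_le_two]; norm_num
  have hpos : 0 ≤ (2 : ℝ) ^ (1 / 4 : ℝ) := by positivity
  constructor
  · rw [← pow_le_pow_iff_left₀ (by norm_num) hpos (by norm_num : 4 ≠ 0), h4]; norm_num
  · rw [← pow_le_pow_iff_left₀ hpos (by norm_num) (by norm_num : 4 ≠ 0), h4]; norm_num

theorem le_exp_137_div_37 : (40.5 : ℝ) ≤ exp (137 / 37) := by
  refine le_of_pow_le_pow_left₀ (by norm_num : 37 ≠ 0) (exp_pos _).le ?_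
  rw [← exp_nat_mul, show ((37 : ℕ) : ℝ) * (137 / 37) = (137 : ℕ) by norm_num, ← exp_one_pow]
  calc (40.5 : ℝ) ^ 37 ≤ 2.7182818283 ^ 137 := by norm_num
    _ ≤ exp 1 ^ 137 := pow_le_pow_left₀ (by norm_num) exp_one_gt_d9.le _

theorem integral_one_div_log_two_exp_le :
    ∫ t in (2 : ℝ)..exp (137 / 37), 1 / log t ≤ 0.37 * exp (137 / 37) := by
  set ρ : ℝ := 2 ^ (1 / 4 : ℝ)
  set x₀ := exp (137 / 37)
  obtain ⟨hρlo, hρhi⟩ := two_rpow_quarter_mem_Icc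
  have hρ : 1 < ρ := by linarith
  have hρ4 : ρ ^ 4 = 2 := by
    simp only [ρ]; rw [← rpow_natCast, ← rpow_mul zero_le_two]; norm_num
  have hlogρ : log ρ = log 2 / 4 := by
    simp only [ρ]; rw [log_rpow two_pos]; ring
  have hlog2 := log_two_gt_d9
  have hx₀ := le_exp_137_div_37
  have hρ21 : 1 < ρ ^ 21 := one_lt_pow₀ hρ (by norm_num)
  have hρ21_lo : (1.189207115 : ℝ) ^ 21 ≤ ρ ^ 21 := pow_le_pow_left₀ (by norm_num) hρlo 21
  have hρ21_hi : ρ ^ 21 ≤ x₀ :=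
    (pow_le_pow_left₀ (by positivity) hρhi 21).trans (le_trans (by norm_num) hx₀)
  have hgrid : ∫ t in ρ ^ 4..ρ ^ 21, 1 / log t ≤ 2 / 0.6931471803 * 4.9561 := by
    refine (integral_one_div_log_pow_le_sum hρ (by norm_num) (by norm_num)).trans ?_
    rw [← Finset.sum_div, hlogρ, div_le_iff₀ (by positivity)]
    calc ∑ k ∈ Finset.Ico (4 : ℕ) 21, (ρ ^ (k + 1) - ρ ^ k) * (1 / (k : ℝ) + 1 / (k + 1))
        ≤ ∑ k ∈ Finset.Ico (4 : ℕ) 21,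
            ((1.189207116 : ℝ) ^ (k + 1) - 1.189207115 ^ k) * (1 / (k : ℝ) + 1 / (k + 1)) := by
          refine Finset.sum_le_sum fun k _ => mul_le_mul_of_nonneg_right ?_ (by positivity)
          exact sub_le_sub (pow_le_pow_left₀ (by positivity) hρhi _)
            (pow_le_pow_left₀ (by norm_num) hρlo _)
      _ ≤ 4.9561 := by
          simp only [Finset.sum_Ico_eq_sum_range, Finset.sum_range_succ, Finset.sum_range_zero]
          norm_num
      _ ≤ 2 / 0.6931471803 * 4.9561 * (2 * (log 2 / 4)) := by
          rw [div_mul_eq_mul_div, div_mul_eq_mul_div, le_div_iff₀ (by norm_num)]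
          nlinarith
  have hlast : ∫ t in ρ ^ 21..x₀, 1 / log t ≤
      (x₀ - 1.189207115 ^ 21) * (4 / (21 * 0.6931471803) + 37 / 137) / 2 :=
    calc ∫ t in ρ ^ 21..x₀, 1 / log t
        ≤ (x₀ - ρ ^ 21) * (1 / log (ρ ^ 21) + 1 / log x₀) / 2 :=
          convexOn_one_div_log.integral_le_trapezoid
            (continuousOn_one_div_log.mono fun t ht => hρ21.trans_le ht.1)
            hρ21 (hρ21.trans_le hρ21_hi) hρ21_hi
      _ = (x₀ - ρ ^ 21) * (4 / (21 * log 2) + 37 / 137) / 2 := by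
          rw [log_pow, hlogρ, log_exp]; push_cast; ring
      _ ≤ _ := by gcongr; linarith
  rw [← hρ4, ← integral_add_adjacent_intervals (intervalIntegrable_one_div_log (by linarith) hρ21)
    (intervalIntegrable_one_div_log hρ21 (hρ21.trans_le hρ21_hi))]
  linarith

theorem li_upper_bound (x : ℝ) (hx : x > 2) :
    ∫ t in (2:ℝ)..x, 1 / Real.log t ≤ 1.37 * x / Real.log x := by
  have hx₀ : 1 < exp (137 / 37) := one_lt_exp_iff.2 (by norm_num)
  have htail := integral_one_div_log_le_sub (c := 1.37) (by norm_num) (by linarith : 1 < x)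
  rw [show (1.37 : ℝ) / (1.37 - 1) = 137 / 37 by norm_num, show (1.37 : ℝ) - 1 = 0.37 by norm_num]
    at htail
  rw [← integral_add_adjacent_intervals (intervalIntegrable_one_div_log one_lt_two hx₀)
    (intervalIntegrable_one_div_log hx₀ (by linarith))]
  linarith [integral_one_div_log_two_exp_le]
end

section
/- The product over all odd primes p > 2 of (1 + 1/(p³ − p² − 2p)) is at most e^{0.1}. -/
/-!
With `x_n = 1 / (n (n - 2) (n + 1))` and `F = oddTailBound`, we have `F 3 = 1/10` and
`F u - F (u + 2) = (2u + 11) / (2 (u - 2) u (u + 2) (u + 4))`. For `n ≥ 5` this difference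
dominates `x_n ≥ log (1 + x_n)`; for `n = 3` it is `17/210`, which still dominates
`log (13/12)` because `exp c ≥ 1 + c + c²/2`. So the series of `log (1 + x_p)` over odd primes
is bounded by a series over odd `n ≥ 3` that telescopes to at most `F 3 = 1/10`, and the product
is the exponential of that series.
-/

open Real Finset

noncomputable def oddTailBound (u : ℝ) : ℝ := (u + 3) / (4 * (u - 2) * u * (u + 2))

lemma oddTailBound_nonneg {u : ℝ} (hu : 2 ≤ u) : 0 ≤ oddTailBound u := by
  unfold oddTailBound
  have : 0 ≤ u - 2 := by linarith
  positivity

lemma oddTailBound_sub {u : ℝ} (hu : 2 < u) :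
    oddTailBound u - oddTailBound (u + 2) =
      (2 * u + 11) / (2 * (u - 2) * u * (u + 2) * (u + 4)) := by
  unfold oddTailBound
  rw [show u + 2 - 2 = u by ring, show u + 2 + 2 = u + 4 by ring]
  have : u - 2 ≠ 0 := by linarith
  have : u ≠ 0 := by linarith
  have : u + 2 ≠ 0 := by linarith
  have : u + 4 ≠ 0 := by linarith
  field_simp
  ring

lemma oddTailBound_sub_pos {u : ℝ} (hu : 2 < u) :
    0 < oddTailBound u - oddTailBound (u + 2) := by
  rw [oddTailBound_sub hu]
  have : 0 < u - 2 := by linarith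
  positivity

lemma pow_three_sub_sq_sub_two_mul_pos {u : ℝ} (hu : 2 < u) : 0 < u ^ 3 - u ^ 2 - 2 * u := by
  have : u ^ 3 - u ^ 2 - 2 * u = u * (u - 2) * (u + 1) := by ring
  rw [this]
  have : 0 < u - 2 := by linarith
  positivity

lemma one_div_cubic_le_oddTailBound_sub {u : ℝ} (hu : 5 ≤ u) :
    1 / (u ^ 3 - u ^ 2 - 2 * u) ≤ oddTailBound u - oddTailBound (u + 2) := by
  have : 0 < u - 2 := by linarith
  rw [oddTailBound_sub (by linarith),
    div_le_div_iff₀ (pow_three_sub_sq_sub_two_mul_pos (by linarith)) (by positivity)]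
  have hgap : (2 * u + 11) * (u ^ 3 - u ^ 2 - 2 * u) - 1 * (2 * (u - 2) * u * (u + 2) * (u + 4)) =
      (u - 2) * u * (u - 5) := by ring
  have : 0 ≤ (u - 2) * u * (u - 5) := by
    have : 0 ≤ u - 5 := by linarith
    positivity
  linarith

lemma log_one_add_le_oddTailBound_sub_three :
    log (1 + 1 / ((3 : ℝ) ^ 3 - 3 ^ 2 - 2 * 3)) ≤ oddTailBound 3 - oddTailBound (3 + 2) := by
  have hF : oddTailBound 3 - oddTailBound (3 + 2) = 17 / 210 := by
    norm_num [oddTailBound]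
  rw [hF, log_le_iff_le_exp (by norm_num)]
  exact le_trans (by norm_num) (quadratic_le_exp_of_nonneg (by norm_num : (0 : ℝ) ≤ 17 / 210))

lemma log_one_add_le_oddTailBound_sub {p : ℕ} (hp : p.Prime) (h2 : 2 < p) :
    log (1 + 1 / ((p : ℝ) ^ 3 - (p : ℝ) ^ 2 - 2 * (p : ℝ))) ≤
      oddTailBound p - oddTailBound (p + 2) := by
  have h4 : p ≠ 4 := by rintro rfl; norm_num at hp
  rcases (show p = 3 ∨ 5 ≤ p by omega) with rfl | h5
  · exact_mod_cast log_one_add_le_oddTailBound_sub_three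
  · have hu : (5 : ℝ) ≤ p := by exact_mod_cast h5
    set x := 1 / ((p : ℝ) ^ 3 - (p : ℝ) ^ 2 - 2 * (p : ℝ))
    have hx : 0 < x := one_div_pos.mpr (pow_three_sub_sq_sub_two_mul_pos (by linarith))
    calc log (1 + x) ≤ x := by linarith [log_le_sub_one_of_pos (by linarith : 0 < 1 + x)]
      _ ≤ oddTailBound p - oddTailBound (p + 2) := one_div_cubic_le_oddTailBound_sub hu

lemma sum_range_oddTailBound_sub_le (N : ℕ) :
    ∑ k ∈ range N, (oddTailBound (2 * k + 3) - oddTailBound (2 * k + 3 + 2)) ≤ 1 / 10 := by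
  have hshift : ∀ k : ℕ, (2 * k + 3 : ℝ) + 2 = 2 * ((k + 1 : ℕ) : ℝ) + 3 := by
    intro k; push_cast; ring
  simp_rw [hshift]
  rw [sum_range_sub' (fun k : ℕ => oddTailBound (2 * k + 3))]
  have hN : 0 ≤ oddTailBound (2 * N + 3) :=
    oddTailBound_nonneg (by linarith [(N.cast_nonneg : (0 : ℝ) ≤ N)])
  norm_num [oddTailBound] at hN ⊢
  linarith

lemma oddTailBound_sub_nonneg (k : ℕ) :
    0 ≤ oddTailBound (2 * k + 3) - oddTailBound (2 * k + 3 + 2) :=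
  (oddTailBound_sub_pos (by linarith [(k.cast_nonneg : (0 : ℝ) ≤ k)])).le

lemma Nat.Prime.two_mul_div_two_sub_one_add_three {p : ℕ} (hp : p.Prime) (h2 : 2 < p) :
    2 * (p / 2 - 1) + 3 = p := by
  obtain ⟨m, rfl⟩ := hp.odd_of_ne_two h2.ne'
  omega

theorem prod_odd_primes_le :
    ∏' p : {p : ℕ // p.Prime ∧ 2 < p},
      (1 + 1 / ((p : ℝ) ^ 3 - (p : ℝ) ^ 2 - 2 * (p : ℝ))) ≤ Real.exp 0.1 := by
  set x : {p : ℕ // p.Prime ∧ 2 < p} → ℝ :=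
    fun p => 1 / ((p : ℝ) ^ 3 - (p : ℝ) ^ 2 - 2 * (p : ℝ))
  have hx : ∀ p, 0 < x p := fun p =>
    one_div_pos.mpr (pow_three_sub_sq_sub_two_mul_pos (by exact_mod_cast p.2.2))
  set t : ℕ → ℝ := fun k => oddTailBound (2 * k + 3) - oddTailBound (2 * k + 3 + 2)
  have ht : Summable t :=
    summable_of_sum_range_le oddTailBound_sub_nonneg sum_range_oddTailBound_sub_le
  have hp : ∀ p : {p : ℕ // p.Prime ∧ 2 < p}, 2 * ((p : ℕ) / 2 - 1) + 3 = p :=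
    fun p => p.2.1.two_mul_div_two_sub_one_add_three p.2.2
  have hinj : Function.Injective fun p : {p : ℕ // p.Prime ∧ 2 < p} => (p : ℕ) / 2 - 1 :=
    fun p q hpq => Subtype.ext <| by rw [← hp p, ← hp q]; exact congrArg (2 * · + 3) hpq
  have hbound : ∀ p, log (1 + x p) ≤ t ((p : ℕ) / 2 - 1) := fun p => by
    have := congrArg (Nat.cast : ℕ → ℝ) (hp p)
    push_cast at this
    simpa only [t, this] using log_one_add_le_oddTailBound_sub p.2.1 p.2.2
  have hlog : Summable fun p => log (1 + x p) :=
    (ht.comp_injective hinj).of_nonneg_of_le (fun p => log_nonneg (by linarith [hx p])) hbound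
  rw [← rexp_tsum_eq_tprod (fun p => by linarith [hx p]) hlog, exp_le_exp]
  calc ∑' p, log (1 + x p)
      ≤ ∑' k, t k :=
        hlog.tsum_le_tsum_of_inj _ hinj (fun k _ => oddTailBound_sub_nonneg k) hbound ht
    _ ≤ 1 / 10 :=
        Real.tsum_le_of_sum_range_le oddTailBound_sub_nonneg sum_range_oddTailBound_sub_le
    _ = 0.1 := by norm_num
end

section
/- For all real x ≥ 1 and all real α, the sum ∑_{n ≤ x} (1 − cos(αn))/n is at most log x + C + log 2 + 3/x, where C is the Euler–Mascheroni constant. -/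
/-!
Put `z = exp (α i)`, `u = ‖1 - z‖` and `N = ⌊x⌋`, so that the sum is `H_N - Re ∑_{n ≤ N} zⁿ / n`.
If `u ≥ 2 / (N + 1)`, compare the partial sum with `-log (1 - z) = ∑ zⁿ / n`: the geometric sums
of `zⁿ` are bounded by `2 / u`, so by Abel summation the tail beyond `N` has size at most
`2 / ((N + 1) u)`, and `log u + 2 / ((N + 1) u) ≤ log 2 + 1 / (N + 1)`.
If `u < 2 / (N + 1)`, then `1 - cos (α n) = ‖1 - zⁿ‖² / 2 ≤ n² u² / 2`, and the whole sum is at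
most `N / (N + 1) ≤ log (N + 1) ≤ H_N`.
In both cases `H_N ≤ log (N + 1) + γ` finishes the bound.
-/

open Finset Complex Filter Topology

theorem norm_sum_range_smul_le_of_antitone {E : Type*} [SeminormedAddCommGroup E]
    [NormedSpace ℝ E] {f : ℕ → ℝ} {g : ℕ → E} {B : ℝ} (hf : Antitone f) (hf0 : ∀ n, 0 ≤ f n)
    (hg : ∀ n, ‖∑ i ∈ range n, g i‖ ≤ B) (n : ℕ) :
    ‖∑ i ∈ range n, f i • g i‖ ≤ f 0 * B := by
  rcases n with _ | m
  · simpa using mul_nonneg (hf0 0) (by simpa using hg 0)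
  rw [sum_range_by_parts, Nat.add_sub_cancel]
  have hstep : ∀ i ∈ range m, ‖(f (i + 1) - f i) • ∑ j ∈ range (i + 1), g j‖
      ≤ (f i - f (i + 1)) * B := fun i _ => by
    rw [norm_smul, Real.norm_eq_abs, abs_sub_comm, abs_of_nonneg (sub_nonneg.2 (hf i.le_succ))]
    exact mul_le_mul_of_nonneg_left (hg _) (sub_nonneg.2 (hf i.le_succ))
  calc _ ≤ f m * B + ∑ i ∈ range m, (f i - f (i + 1)) * B := by
        refine (norm_sub_le _ _).trans (add_le_add ?_ ((norm_sum_le _ _).trans (sum_le_sum hstep)))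
        rw [norm_smul, Real.norm_of_nonneg (hf0 m)]
        exact mul_le_mul_of_nonneg_left (hg _) (hf0 m)
    _ = f 0 * B := by rw [← sum_mul, sum_range_sub']; ring

theorem norm_geom_sum_le {w : ℂ} (hw : ‖w‖ ≤ 1) (hw1 : w ≠ 1) (n : ℕ) :
    ‖∑ i ∈ range n, w ^ i‖ ≤ 2 / ‖1 - w‖ := by
  rw [geom_sum_eq hw1, norm_div, norm_sub_rev w]
  gcongr
  calc ‖w ^ n - 1‖ ≤ ‖w‖ ^ n + 1 := by simpa using norm_sub_le (w ^ n) 1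
    _ ≤ 2 := by linarith [pow_le_one₀ (n := n) (norm_nonneg w) hw]

theorem norm_sum_Ico_pow_div_le {w : ℂ} (hw : ‖w‖ ≤ 1) (hw1 : w ≠ 1) (N M : ℕ) :
    ‖∑ n ∈ Ico (N + 1) M, w ^ n / n‖ ≤ 2 / ((N + 1) * ‖1 - w‖) := by
  have hsum : ∑ n ∈ Ico (N + 1) M, w ^ n / n
      = ∑ j ∈ range (M - (N + 1)), ((N + 1 + j : ℕ) : ℝ)⁻¹ • w ^ (N + 1 + j) := by
    rw [sum_Ico_eq_sum_range]
    refine sum_congr rfl fun j _ => ?_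
    rw [Complex.real_smul, div_eq_inv_mul]
    push_cast
    rfl
  have hpartial (n : ℕ) : ‖∑ i ∈ range n, w ^ (N + 1 + i)‖ ≤ 2 / ‖1 - w‖ := by
    simp_rw [pow_add w (N + 1), ← mul_sum, norm_mul, norm_pow]
    exact mul_le_of_le_one_left (norm_nonneg _) (pow_le_one₀ (norm_nonneg w) hw) |>.trans
      (norm_geom_sum_le hw hw1 n)
  rw [hsum]
  refine (norm_sum_range_smul_le_of_antitone (fun i j hij => ?_) (fun _ => by positivity)
    hpartial _).trans_eq ?_
  · exact inv_anti₀ (by positivity) (by gcongr)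
  · push_cast
    rw [add_zero, div_mul_eq_div_div, inv_mul_eq_div, div_right_comm]

theorem neg_log_sub_le_re_sum_pow_div_of_norm_lt_one {w : ℂ} (hw : ‖w‖ < 1) (N : ℕ) :
    -Real.log ‖1 - w‖ - 2 / ((N + 1) * ‖1 - w‖) ≤ (∑ n ∈ range (N + 1), w ^ n / n).re := by
  set P := ∑ n ∈ range (N + 1), w ^ n / n
  have htail : Tendsto (fun M => ∑ n ∈ Ico (N + 1) M, w ^ n / n) atTop
      (𝓝 (-log (1 - w) - P)) := by
    refine ((hasSum_taylorSeries_neg_log hw).tendsto_sum_nat.sub_const P).congr' ?_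
    filter_upwards [eventually_ge_atTop (N + 1)] with M hM
    rw [sum_Ico_eq_sub _ hM]
  have hw1 : w ≠ 1 := by rintro rfl; simp at hw
  have hT : ‖-log (1 - w) - P‖ ≤ 2 / ((N + 1) * ‖1 - w‖) :=
    le_of_tendsto' htail.norm fun M => norm_sum_Ico_pow_div_le hw.le hw1 N M
  have hre : P.re = -Real.log ‖1 - w‖ - (-log (1 - w) - P).re := by simp [log_re]
  linarith [re_le_norm (-log (1 - w) - P)]

/- Let `r ↑ 1` in the open-disk case applied to `r * w`; since `w ≠ 1`, both sides are continuous
at `r = 1`. -/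
theorem neg_log_sub_le_re_sum_pow_div {w : ℂ} (hw : ‖w‖ ≤ 1) (hw1 : w ≠ 1) (N : ℕ) :
    -Real.log ‖1 - w‖ - 2 / ((N + 1) * ‖1 - w‖) ≤ (∑ n ∈ range (N + 1), w ^ n / n).re := by
  set lower := fun r : ℝ => -Real.log ‖1 - r * w‖ - 2 / ((N + 1) * ‖1 - r * w‖)
  set partialSum := fun r : ℝ => (∑ n ∈ range (N + 1), ((r : ℂ) * w) ^ n / n).re
  have hne : ‖1 - w‖ ≠ 0 := norm_ne_zero_iff.2 (sub_ne_zero.2 hw1.symm)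
  have hlower : ContinuousAt lower 1 := by
    have : ContinuousAt (fun r : ℝ => ‖1 - r * w‖) 1 := by fun_prop
    refine (this.log (by simpa using hne)).neg.sub (continuousAt_const.div (by fun_prop) ?_)
    simpa using mul_ne_zero (Nat.cast_add_one_ne_zero N) hne
  have hpartial : Continuous partialSum := by fun_prop
  have h1 : lower 1 = -Real.log ‖1 - w‖ - 2 / ((N + 1) * ‖1 - w‖) := by simp [lower]
  have h2 : partialSum 1 = (∑ n ∈ range (N + 1), w ^ n / n).re := by simp [partialSum]
  rw [← h1, ← h2]
  refine le_of_tendsto_of_tendsto (hlower.tendsto.mono_left nhdsWithin_le_nhds)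
    ((hpartial.tendsto 1).mono_left (nhdsWithin_le_nhds (s := Set.Iio 1))) ?_
  filter_upwards [Ioo_mem_nhdsLT (zero_lt_one' ℝ)] with r hr
  refine neg_log_sub_le_re_sum_pow_div_of_norm_lt_one ?_ N
  rw [norm_mul, norm_real, Real.norm_of_nonneg hr.1.le]
  exact mul_lt_one_of_nonneg_of_lt_one_left hr.1.le hr.2 hw

-- The `n = 0` term on the left is `1 / 0 = 0`.
theorem re_sum_range_exp_mul_I_pow_div (α : ℝ) (N : ℕ) :
    (∑ n ∈ range (N + 1), exp (α * I) ^ n / n).re = ∑ n ∈ Icc 1 N, Real.cos (α * n) / n := by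
  rw [re_sum, range_eq_Ico, sum_eq_sum_Ico_succ_bot N.succ_pos, zero_add, Nat.succ_eq_add_one,
    Ico_add_one_right_eq_Icc]
  simp only [CharP.cast_eq_zero, div_zero, zero_re, zero_add]
  refine sum_congr rfl fun n _ => ?_
  rw [← exp_nat_mul, show (n : ℂ) * (α * I) = (α * n : ℝ) * I by push_cast; ring,
    ← ofReal_natCast, div_ofReal_re, exp_ofReal_mul_I_re]

theorem norm_one_sub_pow_le {R : Type*} [NormedRing R] [NormOneClass R] {w : R} (hw : ‖w‖ ≤ 1)
    (n : ℕ) : ‖1 - w ^ n‖ ≤ n * ‖1 - w‖ := by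
  rw [← mul_neg_geom_sum, mul_comm (n : ℝ)]
  refine (norm_mul_le _ _).trans (mul_le_mul_of_nonneg_left ?_ (norm_nonneg _))
  refine (norm_sum_le _ _).trans ?_
  simpa using sum_le_sum fun i (_ : i ∈ range n) =>
    (norm_pow_le w i).trans (pow_le_one₀ (norm_nonneg w) hw)

theorem two_mul_one_sub_cos_eq_sq_norm (θ : ℝ) :
    2 * (1 - Real.cos θ) = ‖1 - exp (θ * I)‖ ^ 2 := by
  rw [Complex.sq_norm, normSq_apply]
  simp only [sub_re, one_re, exp_ofReal_mul_I_re, sub_im, one_im, exp_ofReal_mul_I_im]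
  nlinarith [Real.sin_sq_add_cos_sq θ]

theorem one_sub_cos_mul_le (α : ℝ) (n : ℕ) :
    1 - Real.cos (α * n) ≤ n ^ 2 * ‖1 - exp (α * I)‖ ^ 2 / 2 := by
  have hpow : exp (α * I) ^ n = exp ((α * n : ℝ) * I) := by
    rw [← exp_nat_mul]; push_cast; ring_nf
  have h := norm_one_sub_pow_le (norm_exp_ofReal_mul_I α).le n
  rw [hpow] at h
  nlinarith [two_mul_one_sub_cos_eq_sq_norm (α * n), pow_le_pow_left₀ (norm_nonneg _) h 2]

theorem sum_Icc_natCast (N : ℕ) : ∑ n ∈ Icc 1 N, (n : ℝ) = N * (N + 1) / 2 := by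
  induction N with
  | zero => simp
  | succ N ih => rw [sum_Icc_succ_top (by omega), ih]; push_cast; ring

theorem sum_one_sub_cos_div_le_of_norm_le {α : ℝ} {N : ℕ}
    (hα : ‖1 - exp (α * I)‖ ≤ 2 / (N + 1)) :
    ∑ n ∈ Icc 1 N, (1 - Real.cos (α * n)) / n ≤ 1 - 1 / (N + 1) := by
  have hterm : ∀ n ∈ Icc 1 N, (1 - Real.cos (α * n)) / n ≤ 2 / (N + 1) ^ 2 * n := by
    intro n hn
    have hn : (0 : ℝ) < n := by simp at hn; exact_mod_cast hn.1
    rw [div_le_iff₀ hn]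
    calc 1 - Real.cos (α * n) ≤ n ^ 2 * ‖1 - exp (α * I)‖ ^ 2 / 2 := one_sub_cos_mul_le α n
      _ ≤ n ^ 2 * (2 / (N + 1)) ^ 2 / 2 := by gcongr
      _ = _ := by field_simp
  calc _ ≤ ∑ n ∈ Icc 1 N, 2 / ((N : ℝ) + 1) ^ 2 * n := sum_le_sum hterm
    _ = 1 - 1 / (N + 1) := by rw [← mul_sum, sum_Icc_natCast]; field_simp; ring

theorem log_add_two_div_mul_le {a u : ℝ} (ha : 0 < a) (hau : 2 ≤ a * u) (hu : u ≤ 2) :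
    Real.log u + 2 / (a * u) ≤ Real.log 2 + 1 / a := by
  have hu0 : 0 < u := pos_of_mul_pos_right (by linarith) ha.le
  have hlog : Real.log u ≤ Real.log 2 + (u / 2 - 1) := by
    have := Real.log_le_sub_one_of_pos (half_pos hu0)
    rw [Real.log_div hu0.ne' two_ne_zero] at this
    linarith
  have hfrac : 2 / (a * u) - 1 / a ≤ 1 - u / 2 := by
    rw [show 2 / (a * u) - 1 / a = (2 - u) / (a * u) by field_simp, div_le_iff₀ (by positivity)]
    nlinarith
  linarith

theorem sum_one_sub_cos_div_le_harmonic_add (α : ℝ) (N : ℕ) :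
    ∑ n ∈ Icc 1 N, (1 - Real.cos (α * n)) / n ≤ harmonic N + Real.log 2 + 1 / (N + 1) := by
  have hN : (0 : ℝ) < N + 1 := N.cast_add_one_pos
  rcases le_or_gt ‖1 - exp (α * I)‖ (2 / (N + 1)) with hsmall | hlarge
  · have hlog : 1 - 1 / (N + 1) ≤ Real.log (N + 1) := by
      simpa [one_div] using Real.one_sub_inv_le_log_of_pos hN
    have hharm : Real.log (N + 1) ≤ harmonic N := by exact_mod_cast log_add_one_le_harmonic N
    linarith [sum_one_sub_cos_div_le_of_norm_le hsmall, Real.log_pos one_lt_two, one_div_pos.2 hN]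
  · have hz1 : exp (α * I) ≠ 1 := by
      intro h
      simp only [h, sub_self, norm_zero] at hlarge
      linarith [div_pos two_pos hN]
    have hcos := neg_log_sub_le_re_sum_pow_div (norm_exp_ofReal_mul_I α).le hz1 N
    rw [re_sum_range_exp_mul_I_pow_div] at hcos
    have hu2 : ‖1 - exp (α * I)‖ ≤ 2 := by
      simpa [norm_exp_ofReal_mul_I, one_add_one_eq_two] using norm_sub_le 1 (exp (α * I))
    have hlog := log_add_two_div_mul_le hN ((div_le_iff₀' hN).1 hlarge.le) hu2
    have hsplit : ∑ n ∈ Icc 1 N, (1 - Real.cos (α * n)) / n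
        = harmonic N - ∑ n ∈ Icc 1 N, Real.cos (α * n) / n := by
      simp [harmonic_eq_sum_Icc, sub_div, sum_sub_distrib]
    linarith

theorem sum_one_sub_cos_div_le (x α : ℝ) (hx : 1 ≤ x) :
    ∑ n ∈ Finset.Icc 1 ⌊x⌋₊, (1 - Real.cos (α * n)) / (n : ℝ)
      ≤ Real.log x + Real.eulerMascheroniConstant + Real.log 2 + 3 / x := by
  have hx0 : 0 < x := by linarith
  set N := ⌊x⌋₊
  have hNx : (N : ℝ) ≤ x := Nat.floor_le hx0.le
  have hxN : x < N + 1 := Nat.lt_floor_add_one x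
  have hγ : (harmonic N : ℝ) - Real.log (N + 1) ≤ Real.eulerMascheroniConstant :=
    (Real.eulerMascheroniSeq_lt_eulerMascheroniConstant N).le
  have hlog : Real.log (N + 1) ≤ Real.log x + 1 / x := by
    have h := Real.log_le_sub_one_of_pos (div_pos (N.cast_add_one_pos) hx0)
    rw [Real.log_div (N.cast_add_one_pos).ne' hx0.ne'] at h
    have : ((N : ℝ) + 1) / x - 1 ≤ 1 / x := by rw [div_sub_one hx0.ne']; gcongr; linarith
    linarith
  have hinv : 1 / ((N : ℝ) + 1) ≤ 1 / x := one_div_le_one_div_of_le hx0 hxN.le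
  have h3 : 3 / x = 3 * (1 / x) := by ring
  linarith [sum_one_sub_cos_div_le_harmonic_add α N, one_div_pos.2 hx0]
end

section
/- For every real N ≥ 2, the sum over primes p ≤ N of (log p)² is at most 1.26 · N · log N. -/
/-!
Each prime `p ≤ N` contributes `log p * log p ≤ log p * log N`, so the sum is at most
`θ N * log N ≤ ψ N * log N`, and it remains to prove Chebyshev's bound `ψ x ≤ 1.26 x`.
Since `log n! = ∑_{d ≤ n} Λ d * ⌊n / d⌋`, the logarithm of Chebyshev's ratio
`n! (n/30)! / ((n/2)! (n/3)! (n/5)!)` is `∑_{d ≤ n} Λ d * w ⌊n / d⌋` with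
`w m = m - ⌊m/2⌋ - ⌊m/3⌋ - ⌊m/5⌋ + ⌊m/30⌋ ≥ 0`, and `w m = 1` for `1 ≤ m < 6`; hence
`ψ n - ψ (n/6)` is at most this logarithm, which Stirling's formula bounds by
`(4/3) log 2 * n + 4 log n + 2`. As `1.26 / 6 + (4/3) log 2 < 1.26`, strong induction on `n`
closes for `n ≥ 256`; below that, `lcm (1, …, n) ≤ 3 ^ n` is checked by computation.
-/

open Real Finset Chebyshev
open ArithmeticFunction (vonMangoldt_nonneg vonMangoldt_sum)
open scoped Nat ArithmeticFunction.vonMangoldt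

theorem log_factorial_eq_sum_vonMangoldt_mul_div {n N : ℕ} (hn : n ≤ N) :
    log (n ! : ℝ) = ∑ d ∈ Ioc 0 N, Λ d * (n / d : ℕ) := by
  induction n with
  | zero => simp
  | succ n ih =>
    have hdivisors : ∑ d ∈ Ioc 0 N with d ∣ n + 1, Λ d = log (n + 1 : ℕ) := by
      rw [← vonMangoldt_sum]
      refine sum_congr (ext fun d => ?_) fun _ _ => rfl
      simp only [mem_filter, mem_Ioc, Nat.mem_divisors]
      refine ⟨fun h => ⟨h.2, by omega⟩, fun h => ⟨⟨Nat.pos_of_dvd_of_pos h.1 (by omega), ?_⟩, h.1⟩⟩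
      exact (Nat.le_of_dvd (by omega) h.1).trans hn
    rw [Nat.factorial_succ, Nat.cast_mul, log_mul (by positivity) (by positivity), add_comm,
      ih (by omega), ← hdivisors, sum_filter, ← sum_add_distrib]
    refine sum_congr rfl fun d _ => ?_
    rw [Nat.succ_div]
    split_ifs <;> push_cast <;> ring

noncomputable def chebyshevLogRatio (n : ℕ) : ℝ :=
  log (n ! : ℝ) - log ((n / 2)! : ℝ) - log ((n / 3)! : ℝ) - log ((n / 5)! : ℝ) +
    log ((n / 30)! : ℝ)

noncomputable def chebyshevWeight (m : ℕ) : ℝ :=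
  (m : ℝ) - (m / 2 : ℕ) - (m / 3 : ℕ) - (m / 5 : ℕ) + (m / 30 : ℕ)

theorem chebyshevWeight_nonneg (m : ℕ) : 0 ≤ chebyshevWeight m := by
  have : ((m / 2 + m / 3 + m / 5 : ℕ) : ℝ) ≤ (m + m / 30 : ℕ) := by
    exact_mod_cast (by omega : m / 2 + m / 3 + m / 5 ≤ m + m / 30)
  push_cast at this
  rw [chebyshevWeight]
  linarith

theorem one_le_chebyshevWeight {m : ℕ} (h1 : 1 ≤ m) (h6 : m < 6) : 1 ≤ chebyshevWeight m := by
  have : ((m / 2 + m / 3 + m / 5 + 1 : ℕ) : ℝ) ≤ (m + m / 30 : ℕ) := by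
    exact_mod_cast (by omega : m / 2 + m / 3 + m / 5 + 1 ≤ m + m / 30)
  push_cast at this
  rw [chebyshevWeight]
  linarith

theorem chebyshevLogRatio_eq_sum (n : ℕ) :
    chebyshevLogRatio n = ∑ d ∈ Ioc 0 n, Λ d * chebyshevWeight (n / d) := by
  have hdiv (k : ℕ) : log ((n / k)! : ℝ) = ∑ d ∈ Ioc 0 n, Λ d * (n / d / k : ℕ) := by
    simp only [log_factorial_eq_sum_vonMangoldt_mul_div (Nat.div_le_self n k),
      Nat.div_div_eq_div_mul, mul_comm k]
  rw [chebyshevLogRatio, hdiv 2, hdiv 3, hdiv 5, hdiv 30,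
    log_factorial_eq_sum_vonMangoldt_mul_div le_rfl]
  simp only [chebyshevWeight, ← sum_sub_distrib, ← sum_add_distrib, mul_sub, mul_add]

theorem psi_sub_psi_div_six_le_chebyshevLogRatio (n : ℕ) :
    ψ n - ψ (n / 6 : ℕ) ≤ chebyshevLogRatio n := by
  have hψ (m : ℕ) : ψ m = ∑ d ∈ Ioc 0 m, Λ d := by simp [psi]
  have hsplit (f : ℕ → ℝ) :
      ∑ d ∈ Ioc 0 n, f d = ∑ d ∈ Ioc 0 (n / 6), f d + ∑ d ∈ Ioc (n / 6) n, f d :=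
    (sum_Ioc_consecutive f (Nat.zero_le _) (Nat.div_le_self n 6)).symm
  rw [chebyshevLogRatio_eq_sum, hψ, hψ, hsplit, hsplit, add_sub_cancel_left]
  refine le_add_of_nonneg_of_le
    (sum_nonneg fun d _ => mul_nonneg vonMangoldt_nonneg (chebyshevWeight_nonneg _))
    (sum_le_sum fun d hd => le_mul_of_one_le_right vonMangoldt_nonneg ?_)
  rw [mem_Ioc, Nat.div_lt_iff_lt_mul (by norm_num)] at hd
  exact one_le_chebyshevWeight (Nat.div_pos hd.2 (by omega))
    ((Nat.div_lt_iff_lt_mul (by omega)).2 (by linarith))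

theorem log_factorial_le_stirling {n : ℕ} (hn : n ≠ 0) :
    log (n ! : ℝ) ≤ n * log n - n + log n / 2 + 1 := by
  obtain ⟨m, rfl⟩ := Nat.exists_eq_succ_of_ne_zero hn
  have hanti : Stirling.stirlingSeq (m + 1) ≤ Stirling.stirlingSeq 1 :=
    Stirling.stirlingSeq'_antitone (Nat.zero_le m)
  have hlog := log_le_log (Stirling.stirlingSeq'_pos m) hanti
  rw [Stirling.log_stirlingSeq_formula, Stirling.stirlingSeq_one, log_div (exp_pos 1).ne'
    (by positivity), log_exp, log_sqrt (by norm_num), log_mul (by norm_num) (by positivity),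
    log_div (by positivity) (exp_pos 1).ne', log_exp] at hlog
  linarith

theorem monotoneOn_mul_log_sub_self : MonotoneOn (fun x => x * log x - x) (Set.Ici 1) := by
  intro a ha b hb hab
  simp only [Set.mem_Ici] at ha hb
  have hlog_ratio := one_sub_inv_le_log_of_pos (x := b / a) (by positivity)
  rw [log_div (by positivity) (by positivity), inv_div] at hlog_ratio
  have : b - a ≤ b * (log b - log a) := by
    have h := mul_le_mul_of_nonneg_left hlog_ratio (by linarith : 0 ≤ b)
    rwa [show b * (1 - a / b) = b - a by field_simp] at h
  nlinarith [log_nonneg ha]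

theorem mul_log_sub_self_sub_le_sub_mul_log {a b : ℝ} (ha : 0 < a) (hab : a ≤ b) :
    b * log b - b - (a * log a - a) ≤ (b - a) * log b := by
  have hb : 0 < b := ha.trans_le hab
  have hlog_ratio := log_le_sub_one_of_pos (x := b / a) (by positivity)
  rw [log_div hb.ne' ha.ne'] at hlog_ratio
  have : a * (log b - log a) ≤ b - a := by
    have h := mul_le_mul_of_nonneg_left hlog_ratio ha.le
    rwa [show a * (b / a - 1) = b - a by field_simp] at h
  linarith

theorem log_factorial_floor_le {x : ℝ} (hx : 1 ≤ x) :
    log (⌊x⌋₊ ! : ℝ) ≤ x * log x - x + log x / 2 + 1 := by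
  have hm_nat : 1 ≤ ⌊x⌋₊ := Nat.one_le_floor_iff x |>.2 hx
  have hm : (1 : ℝ) ≤ ⌊x⌋₊ := by exact_mod_cast hm_nat
  have hmx : (⌊x⌋₊ : ℝ) ≤ x := Nat.floor_le (by linarith)
  have hstirling := log_factorial_le_stirling (n := ⌊x⌋₊) (by omega)
  have hmono := monotoneOn_mul_log_sub_self (a := ⌊x⌋₊) hm (hm.trans hmx) hmx
  have hlog := log_le_log (by linarith) hmx
  simp only at hmono
  linarith

theorem mul_log_sub_self_sub_log_le_log_factorial_floor {x : ℝ} (hx : 1 ≤ x) :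
    x * log x - x - log x ≤ log (⌊x⌋₊ ! : ℝ) := by
  have hm_nat : 1 ≤ ⌊x⌋₊ := Nat.one_le_floor_iff x |>.2 hx
  have hm : (1 : ℝ) ≤ ⌊x⌋₊ := by exact_mod_cast hm_nat
  have hmx : (⌊x⌋₊ : ℝ) ≤ x := Nat.floor_le (by linarith)
  have hstirling := Stirling.le_log_factorial_stirling (n := ⌊x⌋₊) (by omega)
  have hconvex := mul_log_sub_self_sub_le_sub_mul_log (by linarith) hmx
  have hfrac : (x - ⌊x⌋₊) * log x ≤ log x :=
    mul_le_of_le_one_left (log_nonneg hx) (by linarith [Nat.lt_floor_add_one x])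
  have : 0 ≤ log (2 * π) := log_nonneg (by nlinarith [pi_gt_three])
  linarith [log_nonneg hm]

theorem chebyshevLogRatio_le {n : ℕ} (hn : 30 ≤ n) :
    chebyshevLogRatio n ≤ 4 / 3 * log 2 * n + 4 * log n + 2 := by
  have hx : (30 : ℝ) ≤ n := by exact_mod_cast hn
  have hdiv_ge_one {k : ℕ} (hk : 0 < k) (hk30 : k ≤ 30) : 1 ≤ (n : ℝ) / k := by
    rw [le_div_iff₀ (by positivity), one_mul]
    exact_mod_cast hk30.trans hn
  have hupper {k : ℕ} (hk : 0 < k) (hk30 : k ≤ 30) :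
      log ((n / k)! : ℝ) ≤ n / k * (log n - log k) - n / k + (log n - log k) / 2 + 1 := by
    have h := log_factorial_floor_le (hdiv_ge_one hk hk30)
    rwa [Nat.floor_div_eq_div, log_div (by positivity) (by positivity)] at h
  have hlower {k : ℕ} (hk : 0 < k) (hk30 : k ≤ 30) :
      n / k * (log n - log k) - n / k - (log n - log k) ≤ log ((n / k)! : ℝ) := by
    have h := mul_log_sub_self_sub_log_le_log_factorial_floor (hdiv_ge_one hk hk30)
    rwa [Nat.floor_div_eq_div, log_div (by positivity) (by positivity)] at h
  have h1 := hupper (k := 1) (by norm_num) (by norm_num)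
  have h2 := hlower (k := 2) (by norm_num) (by norm_num)
  have h3 := hlower (k := 3) (by norm_num) (by norm_num)
  have h5 := hlower (k := 5) (by norm_num) (by norm_num)
  have h30 := hupper (k := 30) (by norm_num) (by norm_num)
  simp only [Nat.div_one, Nat.cast_one, log_one, div_one, Nat.cast_ofNat] at h1 h2 h3 h5 h30
  have hlog30 : log (30 : ℝ) = log 2 + log 3 + log 5 := by
    rw [show (30 : ℝ) = 2 * 3 * 5 by norm_num, log_mul (by norm_num) (by norm_num),
      log_mul (by norm_num) (by norm_num)]
  -- The coefficient of `n` is `log (2 ^ 14 * 3 ^ 9 * 5 ^ 5) / 30 ≤ log (2 ^ 40) / 30`.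
  have hpow : 9 * log 3 + 5 * log 5 ≤ 26 * log (2 : ℝ) := by
    have h := log_le_log (by norm_num) (by norm_num : (3 : ℝ) ^ 9 * 5 ^ 5 ≤ 2 ^ 26)
    rwa [log_mul (by norm_num) (by norm_num), log_pow, log_pow, log_pow] at h
  have hconst : (log 2 / 2 + log 3 / 3 + log 5 / 5 - log 30 / 30) * n ≤ 4 / 3 * log 2 * n :=
    mul_le_mul_of_nonneg_right (by linarith) (by positivity)
  have : 0 ≤ log (2 : ℝ) := log_nonneg (by norm_num)
  have : 0 ≤ log (3 : ℝ) := log_nonneg (by norm_num)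
  have : 0 ≤ log (5 : ℝ) := log_nonneg (by norm_num)
  rw [chebyshevLogRatio]
  linarith

theorem psi_natCast_le_mul_log_three {n : ℕ} (hn : n < 256) : ψ n ≤ n * log 3 := by
  have hlcm : ∀ m < 256, Nat.lcmUpto m ≤ 3 ^ m := by decide +kernel
  rw [psi_eq_log_lcmUpto, ← log_pow]
  exact log_le_log (by exact_mod_cast Nat.lcmUpto_pos n) (by exact_mod_cast hlcm n hn)

theorem psi_natCast_le (n : ℕ) : ψ n ≤ 1.26 * n := by
  induction n using Nat.strong_induction_on with
  | _ n ih =>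
  have hlog2 := log_two_lt_d9
  rcases lt_or_ge n 256 with hn | hn
  · have hlog3 : 4 * log 3 ≤ 7 * log (2 : ℝ) := by
      have h := log_le_log (by norm_num) (by norm_num : (3 : ℝ) ^ 4 ≤ 2 ^ 7)
      rwa [log_pow, log_pow] at h
    calc ψ n ≤ n * log 3 := psi_natCast_le_mul_log_three hn
      _ ≤ n * 1.26 := by gcongr; linarith
      _ = 1.26 * n := mul_comm _ _
  · have hx : (256 : ℝ) ≤ n := by exact_mod_cast hn
    have hstep := psi_sub_psi_div_six_le_chebyshevLogRatio n
    have hratio := chebyshevLogRatio_le (by omega : 30 ≤ n)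
    have hih : ψ (n / 6 : ℕ) ≤ 1.26 * (n / 6 : ℝ) :=
      (ih _ (by omega)).trans (by gcongr; exact Nat.cast_div_le)
    have hlog : log n ≤ n / 256 - 1 + 8 * log 2 := by
      have h := log_le_sub_one_of_pos (x := n / 256) (by positivity)
      rw [log_div (by positivity) (by norm_num), show (256 : ℝ) = 2 ^ 8 by norm_num,
        log_pow] at h
      push_cast at h
      linarith
    have : log 2 * n ≤ 0.6931471808 * n := mul_le_mul_of_nonneg_right hlog2.le (by positivity)
    linarith

theorem psi_le_1_26_mul {x : ℝ} (hx : 0 ≤ x) : ψ x ≤ 1.26 * x := by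
  rw [psi_eq_psi_coe_floor]
  exact (psi_natCast_le _).trans (by gcongr; exact Nat.floor_le hx)

theorem sum_log_sq_le_theta_mul_log (x : ℝ) :
    ∑ p ∈ Ioc 0 ⌊x⌋₊ with p.Prime, log p ^ 2 ≤ θ x * log x := by
  rw [theta, sum_mul]
  refine sum_le_sum fun p hp => ?_
  rw [mem_filter, mem_Ioc] at hp
  have hp0 : (0 : ℝ) < p := by exact_mod_cast hp.2.pos
  have hpx : (p : ℝ) ≤ x := (Nat.le_floor_iff' hp.2.ne_zero).1 hp.1.2
  rw [sq]
  exact mul_le_mul_of_nonneg_left (log_le_log hp0 hpx)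
    (log_nonneg (by exact_mod_cast hp.2.one_lt.le))

theorem sum_log_sq_primes_le (N : ℝ) (hN : 2 ≤ N) :
    ∑ p ∈ (Finset.Icc 1 ⌊N⌋₊).filter Nat.Prime, (Real.log p) ^ 2
      ≤ 1.26 * N * Real.log N := by
  have hlog : 0 ≤ log N := log_nonneg (by linarith)
  calc ∑ p ∈ Ioc 0 ⌊N⌋₊ with p.Prime, log p ^ 2
      ≤ θ N * log N := sum_log_sq_le_theta_mul_log N
    _ ≤ ψ N * log N := by gcongr; exact theta_le_psi N
    _ ≤ 1.26 * N * log N := by gcongr; exact psi_le_1_26_mul (by linarith)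
end

section
/- For all multiplicative functions f with |f(n)| ≤ B for all n, the double sum ∑ over primes p ≥ 2 and integers k ≥ 2 of |f(p^k)|·(log p)·∑_{n ≤ N p^{−k}} |f(n)| is at most 0.8 · B² · N. -/
/-!
Since `‖f‖ ≤ B`, the inner sum is at most `B N / p ^ (k + 2)`, so the `(p, k)` term is at most
`B² N log p · p⁻¹ ^ (k + 2)`; summing the geometric series in `k` leaves `B² N` times
`∑ₚ log p / (p (p - 1))`, whose true value is about `0.7554`.

For the primes below `257` we use the least power of two `2 ^ j ≥ p` and the first term of the
series of `artanh`, `log p ≤ j log 2 - 2 (2 ^ j - p) / (2 ^ j + p)`, and add up the resulting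
rational bounds (`≤ 0.7525`). Beyond `256` we forget primality and telescope:
`log n / (n (n - 1)) ≤ T (n - 1) - T n` for `T n = (log n + 2) / n`, which leaves
`T 256 = (8 log 2 + 2) / 256 < 0.0295`.
-/

open Real Finset Set

lemma sum_Icc_one_div_le {a : ℕ → ℝ} {B : ℝ} (hB : 0 ≤ B) (ha : ∀ n, a n ≤ B) (N m : ℕ) :
    ∑ n ∈ Icc 1 (N / m), a n ≤ B * (N / m : ℝ) :=
  calc ∑ n ∈ Icc 1 (N / m), a n ≤ ∑ _n ∈ Icc 1 (N / m), B := sum_le_sum fun n _ => ha n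
    _ = B * (N / m : ℕ) := by rw [sum_const, Nat.card_Icc, nsmul_eq_mul, mul_comm]; simp
    _ ≤ B * (N / m : ℝ) := mul_le_mul_of_nonneg_left Nat.cast_div_le hB

lemma hasSum_inv_pow_add_two {x : ℝ} (hx : 1 < x) :
    HasSum (fun k : ℕ => x⁻¹ ^ (k + 2)) (x * (x - 1))⁻¹ := by
  have hx0 : 0 < x := one_pos.trans hx
  have h := (hasSum_geometric_of_lt_one (inv_nonneg.2 hx0.le) (inv_lt_one_of_one_lt₀ hx)).mul_left
    (x⁻¹ ^ 2)
  have hval : (x * (x - 1))⁻¹ = x⁻¹ ^ 2 * (1 - x⁻¹)⁻¹ := by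
    have : x - 1 ≠ 0 := by linarith
    field_simp
  have hfun : (fun k : ℕ => x⁻¹ ^ (k + 2)) = fun k => x⁻¹ ^ 2 * x⁻¹ ^ k :=
    funext fun k => by ring
  rw [hval, hfun]
  exact h

lemma tsum_norm_pow_mul_log_mul_sum_le {E : Type*} [SeminormedAddCommGroup E] {f : ℕ → E} {B : ℝ}
    (hfB : ∀ n, ‖f n‖ ≤ B) (N : ℕ) {p : ℕ} (hp : 1 < p) :
    ∑' k : ℕ, ‖f (p ^ (k + 2))‖ * log p * ∑ n ∈ Icc 1 (N / p ^ (k + 2)), ‖f n‖ ≤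
      B ^ 2 * N * (log p / (p * (p - 1))) := by
  have hB : 0 ≤ B := (norm_nonneg _).trans (hfB 0)
  have hlog : 0 ≤ log p := log_natCast_nonneg p
  have hgeo := (hasSum_inv_pow_add_two (Nat.one_lt_cast.2 hp)).mul_left (B ^ 2 * N * log p)
  have hle : ∀ k : ℕ, ‖f (p ^ (k + 2))‖ * log p * ∑ n ∈ Icc 1 (N / p ^ (k + 2)), ‖f n‖ ≤
      B ^ 2 * N * log p * (p : ℝ)⁻¹ ^ (k + 2) := fun k =>
    calc _ ≤ B * log p * (B * (N / (p ^ (k + 2) : ℕ) : ℝ)) :=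
          mul_le_mul (mul_le_mul_of_nonneg_right (hfB _) hlog) (sum_Icc_one_div_le hB hfB N _)
            (sum_nonneg fun _ _ => norm_nonneg _) (mul_nonneg hB hlog)
      _ = B ^ 2 * N * log p * (p : ℝ)⁻¹ ^ (k + 2) := by push_cast; ring
  calc _ ≤ ∑' k : ℕ, B ^ 2 * N * log p * (p : ℝ)⁻¹ ^ (k + 2) :=
        Summable.tsum_le_tsum hle (hgeo.summable.of_nonneg_of_le (fun k => by positivity) hle)
          hgeo.summable
    _ = B ^ 2 * N * (log p / (p * (p - 1))) := by rw [hgeo.tsum_eq, div_eq_mul_inv, mul_assoc]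

lemma log_le_log_sub_two_mul_div {x y : ℝ} (hx : 0 < x) (hxy : x ≤ y) :
    log x ≤ log y - 2 * (y - x) / (y + x) := by
  have hy : 0 < y := hx.trans_le hxy
  have ht0 : 0 ≤ (y - x) / (y + x) := div_nonneg (by linarith) (by linarith)
  have ht1 : (y - x) / (y + x) < 1 := (div_lt_one (by linarith)).2 (by linarith)
  have hratio : (1 + (y - x) / (y + x)) / (1 - (y - x) / (y + x)) = y / x := by
    have : y + x ≠ 0 := by positivity
    field_simp [hx.ne']
    ring
  have h := Real.sum_range_le_log_div ht0 ht1 1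
  rw [hratio, log_div hy.ne' hx.ne', sum_range_one] at h
  norm_num at h
  rw [mul_div_assoc]
  linarith

/-- `2 ^ Nat.clog 2 n` is the least power of two `≥ n`; `0.6931471808` bounds `log 2` from above
(`Real.log_two_lt_d9`). -/
noncomputable def logUpperBound (n : ℕ) : ℝ :=
  Nat.clog 2 n * 0.6931471808 - 2 * (2 ^ Nat.clog 2 n - n) / (2 ^ Nat.clog 2 n + n)

lemma log_le_logUpperBound {n : ℕ} (hn : 0 < n) : log n ≤ logUpperBound n := by
  have hle : (n : ℝ) ≤ 2 ^ Nat.clog 2 n := by exact_mod_cast Nat.le_pow_clog one_lt_two n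
  have hlog2 : log (2 ^ Nat.clog 2 n) ≤ Nat.clog 2 n * 0.6931471808 := by
    rw [log_pow]
    exact mul_le_mul_of_nonneg_left log_two_lt_d9.le (Nat.cast_nonneg _)
  have := log_le_log_sub_two_mul_div (by exact_mod_cast hn) hle
  unfold logUpperBound
  linarith

set_option maxRecDepth 10000 in
lemma sum_range_prime_logUpperBound_le :
    ∑ n ∈ range 257, {p : ℕ | p.Prime}.indicator
      (fun n : ℕ => logUpperBound n / (n * (n - 1))) n ≤ 0.7525 := by
  norm_num [sum_range_succ, indicator_apply, logUpperBound]

lemma log_div_mul_sub_one_nonneg (n : ℕ) : 0 ≤ log n / (n * (n - 1 : ℝ)) := by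
  rcases Nat.eq_zero_or_pos n with rfl | hn
  · simp
  · have : (1 : ℝ) ≤ n := by exact_mod_cast hn
    exact div_nonneg (log_natCast_nonneg n) (mul_nonneg (by linarith) (by linarith))

lemma log_div_mul_sub_one_le_sub {x : ℝ} (hx : 2 ≤ x) :
    log x / (x * (x - 1)) ≤ (log (x - 1) + 2) / (x - 1) - (log x + 2) / x := by
  have hx1 : 0 < x - 1 := by linarith
  have hx0 : 0 < x := by linarith
  have hquot : log x - log (x - 1) ≤ 1 / (x - 1) := by
    rw [← log_div hx0.ne' hx1.ne']
    have := log_le_sub_one_of_pos (div_pos hx0 hx1)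
    have e : x / (x - 1) - 1 = 1 / (x - 1) := by field_simp; ring
    linarith
  have key : x * (log x - log (x - 1)) ≤ 2 :=
    calc x * (log x - log (x - 1)) ≤ x * (1 / (x - 1)) := mul_le_mul_of_nonneg_left hquot hx0.le
      _ ≤ 2 := by rw [mul_one_div, div_le_iff₀ hx1]; linarith
  have e : (log (x - 1) + 2) / (x - 1) - (log x + 2) / x - log x / (x * (x - 1)) =
      (2 - x * (log x - log (x - 1))) / (x * (x - 1)) := by
    field_simp; ring
  exact sub_nonneg.mp (e ▸ div_nonneg (by linarith) (by positivity))

lemma sum_range_log_div_mul_sub_one_le {k : ℕ} (hk : 1 ≤ k) (M : ℕ) :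
    ∑ i ∈ range M, log ↑(i + (k + 1)) / (↑(i + (k + 1)) * (↑(i + (k + 1)) - 1 : ℝ)) ≤
      (log k + 2) / k := by
  set T : ℕ → ℝ := fun m => (log ↑(m + k) + 2) / ↑(m + k)
  have hstep (i : ℕ) : log ↑(i + (k + 1)) / (↑(i + (k + 1)) * (↑(i + (k + 1)) - 1 : ℝ)) ≤
      T i - T (i + 1) := by
    have hk' : (1 : ℝ) ≤ k := Nat.one_le_cast.2 hk
    have hx : (2 : ℝ) ≤ ↑(i + (k + 1)) := by push_cast; linarith [(i.cast_nonneg : (0 : ℝ) ≤ i)]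
    convert log_div_mul_sub_one_le_sub hx using 4 <;> push_cast <;> ring_nf
  have hT : 0 ≤ T M := div_nonneg (by linarith [log_natCast_nonneg (M + k)]) (Nat.cast_nonneg _)
  calc _ ≤ ∑ i ∈ range M, (T i - T (i + 1)) := sum_le_sum fun i _ => hstep i
    _ = T 0 - T M := sum_range_sub' T M
    _ ≤ (log k + 2) / k := by simp only [T, zero_add]; linarith

lemma summable_log_div_mul_sub_one : Summable fun n : ℕ => log n / (n * (n - 1 : ℝ)) :=
  (summable_nat_add_iff 2).mp <| summable_of_sum_range_le
    (fun _ => log_div_mul_sub_one_nonneg _) (sum_range_log_div_mul_sub_one_le le_rfl)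

theorem tsum_primes_log_div_mul_sub_one_le :
    ∑' p : Nat.Primes, log p / (p * (p - 1 : ℝ)) ≤ 0.8 := by
  set w : ℕ → ℝ := fun n => log n / (n * (n - 1 : ℝ))
  set P : Set ℕ := {p | p.Prime}
  have hhead : ∑ n ∈ range 257, P.indicator w n ≤ 0.7525 := by
    refine (sum_le_sum fun n _ => indicator_le_indicator' fun hn => ?_).trans
      sum_range_prime_logUpperBound_le
    have hn1 : (1 : ℝ) ≤ n := Nat.one_le_cast.2 (Nat.Prime.one_le hn)
    exact div_le_div_of_nonneg_right (log_le_logUpperBound (Nat.Prime.pos hn)) (by nlinarith)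
  have htail : ∑' i, P.indicator w (i + 257) ≤ (log 256 + 2) / 256 := by
    refine Real.tsum_le_of_sum_range_le
      (fun _ => indicator_nonneg (fun _ _ => log_div_mul_sub_one_nonneg _) _) fun M => ?_
    calc ∑ i ∈ range M, P.indicator w (i + 257) ≤ ∑ i ∈ range M, w (i + 257) :=
          sum_le_sum fun i _ => indicator_apply_le' (fun _ => le_rfl) fun _ =>
            log_div_mul_sub_one_nonneg _
      _ ≤ (log 256 + 2) / 256 := sum_range_log_div_mul_sub_one_le (k := 256) (by norm_num) M
  have hlog256 : log 256 < 8 * 0.6931471808 := by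
    rw [show (256 : ℝ) = 2 ^ 8 by norm_num, log_pow]
    push_cast
    linarith [log_two_lt_d9]
  have hsub : ∑' p : Nat.Primes, log p / (p * (p - 1 : ℝ)) = ∑' n, P.indicator w n :=
    tsum_subtype P w
  rw [hsub, ← (summable_log_div_mul_sub_one.indicator P).sum_add_tsum_nat_add 257]
  linarith

theorem prime_power_sum_bound_general (B : ℝ) (N : ℕ)
    (f : ArithmeticFunction ℂ)
    (hfB : ∀ n : ℕ, ‖f n‖ ≤ B) :
    ∑' p : Nat.Primes, ∑' k : ℕ,
      ‖f ((p : ℕ) ^ (k + 2))‖ * Real.log p *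
        ∑ n ∈ Finset.Icc 1 (N / (p : ℕ) ^ (k + 2)), ‖f n‖
      ≤ 0.8 * B ^ 2 * N := by
  have hprime (p : Nat.Primes) := tsum_norm_pow_mul_log_mul_sum_le hfB N p.prop.one_lt
  have hw : Summable fun p : Nat.Primes => B ^ 2 * N * (log p / (p * (p - 1 : ℝ))) :=
    (summable_log_div_mul_sub_one.subtype {p | p.Prime}).mul_left _
  calc _ ≤ ∑' p : Nat.Primes, B ^ 2 * N * (log p / (p * (p - 1 : ℝ))) :=
        Summable.tsum_le_tsum hprime
          (hw.of_nonneg_of_le (fun p => tsum_nonneg fun k => by positivity) hprime) hw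
    _ = B ^ 2 * N * ∑' p : Nat.Primes, log p / (p * (p - 1 : ℝ)) := tsum_mul_left
    _ ≤ B ^ 2 * N * 0.8 := by gcongr; exact tsum_primes_log_div_mul_sub_one_le
    _ = 0.8 * B ^ 2 * N := by ring

theorem prime_power_sum_bound (B : ℝ) (hB : 1 ≤ B) (N : ℕ) (hN : 0 < N)
    (f : ArithmeticFunction ℂ) (hf : f.IsMultiplicative)
    (hfB : ∀ n : ℕ, ‖f n‖ ≤ B) :
    ∑' p : Nat.Primes, ∑' k : ℕ,
      ‖f ((p : ℕ) ^ (k + 2))‖ * Real.log p *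
        ∑ n ∈ Finset.Icc 1 (N / (p : ℕ) ^ (k + 2)), ‖f n‖
      ≤ 0.8 * B ^ 2 * N :=
  prime_power_sum_bound_general B N f hfB
end
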